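/- arXiv:cond-mat/9808046 — 3 statements merged into one kernel-verified Lean document; each statement's English description precedes it below -/
import Mathlib

section
/- For every real vector φ ∈ ℝ^N one has Re( h² φᵗ (L + hI + iα)^{-2} φ ) ≤ Re( h φᵗ (L + hI + iα)^{-1} φ ) ≤ φᵗφ, where φᵗMφ = Σ_{ij} φ_i M_{ij} φ_j. -/
/-!
Write `M = L + hI + iα` and `x = M⁻¹φ`. Since `M` is complex symmetric, the two quadratic forms
are `φᵗx` and `xᵗx`. As `φ` is real, `Re φᵗx = Re x*Mx = x*Lx + h‖x‖² ≥ h‖x‖²`, while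
`Re xᵗx ≤ ‖x‖²`; this is the first inequality. The second follows from
`0 ≤ ‖φ - h x‖² = ‖φ‖² - 2h Re φᵗx + h²‖x‖² ≤ ‖φ‖² - h Re φᵗx`.
-/

open Matrix BigOperators Complex

namespace Matrix

variable {ι : Type*} [Fintype ι]

lemma sum_sum_mul_mul_eq_dotProduct_mulVec {R : Type*} [CommSemiring R] (a b : ι → R)
    (A : Matrix ι ι R) : ∑ i, ∑ j, a i * A i j * b j = a ⬝ᵥ (A *ᵥ b) := by
  simp only [dotProduct, mulVec, Finset.mul_sum, mul_assoc]

lemma IsSymm.dotProduct_mul_self_mulVec {R : Type*} [CommSemiring R] {A : Matrix ι ι R}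
    (hA : A.IsSymm) (v : ι → R) : v ⬝ᵥ ((A * A) *ᵥ v) = (A *ᵥ v) ⬝ᵥ (A *ᵥ v) := by
  rw [← mulVec_mulVec, dotProduct_mulVec, ← vecMul_transpose, hA.eq, dotProduct_comm]

lemma re_star_dotProduct_map_ofReal_mulVec_nonneg {L : Matrix ι ι ℝ} (hL : L.PosSemidef)
    (v : ι → ℂ) : 0 ≤ (star v ⬝ᵥ (L.map (↑) *ᵥ v)).re := by
  have key : (star v ⬝ᵥ (L.map (↑) *ᵥ v)).re
      = (fun i => (v i).re) ⬝ᵥ (L *ᵥ fun i => (v i).re)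
        + (fun i => (v i).im) ⬝ᵥ (L *ᵥ fun i => (v i).im) := by
    simp only [dotProduct, mulVec, map_apply, Pi.star_apply, re_sum, Finset.mul_sum,
      ← Finset.sum_add_distrib, mul_re, mul_im, star_def, conj_re, conj_im, ofReal_re, ofReal_im]
    refine Finset.sum_congr rfl fun i _ => Finset.sum_congr rfl fun j _ => ?_
    ring
  simpa [key] using add_nonneg (hL.dotProduct_mulVec_nonneg fun i => (v i).re)
    (hL.dotProduct_mulVec_nonneg fun i => (v i).im)

lemma re_star_dotProduct_self (v : ι → ℂ) : (star v ⬝ᵥ v).re = ∑ i, normSq (v i) := by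
  simp [dotProduct, re_sum, normSq_apply]

lemma re_dotProduct_self_le_sum_normSq (x : ι → ℂ) :
    (x ⬝ᵥ x).re ≤ ∑ i, normSq (x i) := by
  simp only [dotProduct, re_sum, mul_re, normSq_apply]
  gcongr with i
  nlinarith [sq_nonneg (x i).im]

lemma two_mul_re_dotProduct_le (φ : ι → ℝ) (x : ι → ℂ) (c : ℝ) :
    2 * c * ((fun i => (φ i : ℂ)) ⬝ᵥ x).re ≤ ∑ i, φ i * φ i + c ^ 2 * ∑ i, normSq (x i) := by
  simp only [dotProduct, re_sum, re_ofReal_mul, Finset.mul_sum, ← Finset.sum_add_distrib,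
    normSq_apply]
  gcongr with i
  nlinarith [sq_nonneg (φ i - c * (x i).re), sq_nonneg (c * (x i).im)]

variable [DecidableEq ι]

lemma re_star_dotProduct_add_smul_one_add_I_smul_diagonal_mulVec (A : Matrix ι ι ℂ) (h : ℝ)
    (α : ι → ℝ) (v : ι → ℂ) :
    (star v ⬝ᵥ ((A + (h : ℂ) • 1 + I • diagonal fun i => (α i : ℂ)) *ᵥ v)).re
      = (star v ⬝ᵥ (A *ᵥ v)).re + h * ∑ i, normSq (v i) := by
  have hD : (diagonal fun i => (α i : ℂ)).IsHermitian :=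
    isHermitian_diagonal_of_self_adjoint _ (funext fun i => conj_ofReal (α i))
  have hD_im : (star v ⬝ᵥ (diagonal fun i => (α i : ℂ)) *ᵥ v).im = 0 :=
    hD.im_star_dotProduct_mulVec_self v
  simp only [add_mulVec, smul_mulVec, one_mulVec, dotProduct_add, dotProduct_smul, smul_eq_mul,
    add_re, re_ofReal_mul, I_mul_re, re_star_dotProduct_self, hD_im, neg_zero, add_zero]

lemma isUnit_det_of_coercive {M : Matrix ι ι ℂ} {h : ℝ} (hh : 0 < h)
    (hM : ∀ v, h * ∑ i, normSq (v i) ≤ (star v ⬝ᵥ (M *ᵥ v)).re) : IsUnit M.det := by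
  rw [isUnit_iff_ne_zero]
  intro hdet
  obtain ⟨v, hv, hMv⟩ := exists_mulVec_eq_zero_iff.mpr hdet
  obtain ⟨i, hi⟩ := Function.ne_iff.mp hv
  have hpos : 0 < ∑ i, normSq (v i) :=
    Finset.sum_pos' (fun j _ => normSq_nonneg _) ⟨i, Finset.mem_univ i, normSq_pos.mpr hi⟩
  have hMv_re := hM v
  rw [hMv, dotProduct_zero, zero_re] at hMv_re
  nlinarith

lemma mul_sum_normSq_inv_mulVec_le_re_dotProduct {M : Matrix ι ι ℂ} {h : ℝ} (hh : 0 < h)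
    (hM : ∀ v, h * ∑ i, normSq (v i) ≤ (star v ⬝ᵥ (M *ᵥ v)).re) {φ : ι → ℂ} (hφ : star φ = φ) :
    h * ∑ i, normSq ((M⁻¹ *ᵥ φ) i) ≤ (φ ⬝ᵥ (M⁻¹ *ᵥ φ)).re := by
  have hMx : M *ᵥ (M⁻¹ *ᵥ φ) = φ := by
    rw [mulVec_mulVec, mul_nonsing_inv _ (isUnit_det_of_coercive hh hM), one_mulVec]
  calc h * ∑ i, normSq ((M⁻¹ *ᵥ φ) i) ≤ (star (M⁻¹ *ᵥ φ) ⬝ᵥ (M *ᵥ (M⁻¹ *ᵥ φ))).re := hM _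
    _ = (φ ⬝ᵥ (M⁻¹ *ᵥ φ)).re := by rw [hMx, star_dotProduct, hφ, star_def, conj_re]

end Matrix

theorem quadratic_form_inequalities_general (N : ℕ)
    (L : Matrix (Fin N) (Fin N) ℝ) (hLpsd : L.PosSemidef)
    (h : ℝ) (hh : 0 < h) (α : Fin N → ℝ) (φ : Fin N → ℝ) :
    ((h : ℂ) ^ 2 * ∑ i, ∑ j, (φ i : ℂ) *
        (((L.map (fun x => (x : ℂ)) + (h : ℂ) • 1
          + Complex.I • Matrix.diagonal (fun i => (α i : ℂ)))⁻¹
        * (L.map (fun x => (x : ℂ)) + (h : ℂ) • 1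
          + Complex.I • Matrix.diagonal (fun i => (α i : ℂ)))⁻¹) i j) * (φ j : ℂ)).re
      ≤ ((h : ℂ) * ∑ i, ∑ j, (φ i : ℂ) *
        ((L.map (fun x => (x : ℂ)) + (h : ℂ) • 1
          + Complex.I • Matrix.diagonal (fun i => (α i : ℂ)))⁻¹ i j) * (φ j : ℂ)).re
    ∧ ((h : ℂ) * ∑ i, ∑ j, (φ i : ℂ) *
        ((L.map (fun x => (x : ℂ)) + (h : ℂ) • 1
          + Complex.I • Matrix.diagonal (fun i => (α i : ℂ)))⁻¹ i j) * (φ j : ℂ)).re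
      ≤ ∑ i, φ i * φ i := by
  set M := L.map (fun x => (x : ℂ)) + (h : ℂ) • 1 + I • diagonal fun i => (α i : ℂ)
  set φc : Fin N → ℂ := fun i => (φ i : ℂ)
  have hM_coercive : ∀ v, h * ∑ i, normSq (v i) ≤ (star v ⬝ᵥ (M *ᵥ v)).re := fun v => by
    rw [re_star_dotProduct_add_smul_one_add_I_smul_diagonal_mulVec]
    linarith [re_star_dotProduct_map_ofReal_mulVec_nonneg hLpsd v]
  have hM_symm : M.IsSymm := ((isHermitian_iff_isSymm.mp hLpsd.1).map _).add
    (isSymm_one.smul _) |>.add ((isSymm_diagonal _).smul _)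
  have hφc : star φc = φc := funext fun i => conj_ofReal (φ i)
  rw [sum_sum_mul_mul_eq_dotProduct_mulVec, sum_sum_mul_mul_eq_dotProduct_mulVec,
    hM_symm.inv.dotProduct_mul_self_mulVec, ← ofReal_pow, re_ofReal_mul, re_ofReal_mul]
  set x := M⁻¹ *ᵥ φc
  have hlow := mul_sum_normSq_inv_mulVec_le_re_dotProduct hh hM_coercive hφc
  have hsq := two_mul_re_dotProduct_le φ x h
  have hlow' : h ^ 2 * ∑ i, normSq (x i) ≤ h * (φc ⬝ᵥ x).re := by
    rw [pow_two, mul_assoc]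
    exact mul_le_mul_of_nonneg_left hlow hh.le
  constructor
  · calc h ^ 2 * (x ⬝ᵥ x).re ≤ h ^ 2 * ∑ i, normSq (x i) :=
        mul_le_mul_of_nonneg_left (re_dotProduct_self_le_sum_normSq x) (sq_nonneg h)
      _ ≤ h * (φc ⬝ᵥ x).re := hlow'
  · linarith

/-- For every real vector `φ`:
`Re(h² φᵗ (L+hI+iα)⁻² φ) ≤ Re(h φᵗ (L+hI+iα)⁻¹ φ) ≤ φᵗφ`. -/
theorem quadratic_form_inequalities (N : ℕ) (hN : 0 < N)
    (L : Matrix (Fin N) (Fin N) ℝ) (hLsymm : L.IsSymm) (hLpsd : L.PosSemidef)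
    (h : ℝ) (hh : 0 < h) (α : Fin N → ℝ) (φ : Fin N → ℝ) :
    ((h : ℂ) ^ 2 * ∑ i, ∑ j, (φ i : ℂ) *
        (((L.map (fun x => (x : ℂ)) + (h : ℂ) • 1
          + Complex.I • Matrix.diagonal (fun i => (α i : ℂ)))⁻¹
        * (L.map (fun x => (x : ℂ)) + (h : ℂ) • 1
          + Complex.I • Matrix.diagonal (fun i => (α i : ℂ)))⁻¹) i j) * (φ j : ℂ)).re
      ≤ ((h : ℂ) * ∑ i, ∑ j, (φ i : ℂ) *
        ((L.map (fun x => (x : ℂ)) + (h : ℂ) • 1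
          + Complex.I • Matrix.diagonal (fun i => (α i : ℂ)))⁻¹ i j) * (φ j : ℂ)).re
    ∧ ((h : ℂ) * ∑ i, ∑ j, (φ i : ℂ) *
        ((L.map (fun x => (x : ℂ)) + (h : ℂ) • 1
          + Complex.I • Matrix.diagonal (fun i => (α i : ℂ)))⁻¹ i j) * (φ j : ℂ)).re
      ≤ ∑ i, φ i * φ i :=
  quadratic_form_inequalities_general N L hLpsd h hh α φ
end

section
/- For every real vector φ ∈ ℝ^N, the complex number φᵗ (L + hI − iα)^{-1} (L + hI + iα)^{-1} φ is a nonnegative real number and satisfies φᵗ (L + hI − iα)^{-1} (L + hI + iα)^{-1} φ ≤ (1/h) Re( φᵗ (L + hI + iα)^{-1} φ ). -/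
/-!
Write `A = S + iK` with `S = L + hI` positive definite and `K = diag α` Hermitian, so that
`L + hI − iα = Aᴴ`, and put `ψ = A⁻¹φ`. Since `φ` is real, `φᵗ (Aᴴ)⁻¹ A⁻¹ φ = ψᴴψ ≥ 0`, while
`φᵗ A⁻¹ φ = (Aψ)ᴴψ = ψᴴ Aᴴ ψ`, whose real part is `ψᴴ S ψ ≥ h ψᴴψ`.
-/

open Matrix BigOperators
open scoped ComplexOrder

namespace Matrix

variable {n : Type*} [Fintype n]

lemma re_star_dotProduct_map_ofReal_mulVec (L : Matrix n n ℝ) (x : n → ℂ) :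
    (star x ⬝ᵥ L.map ((↑) : ℝ → ℂ) *ᵥ x).re
      = (fun i => (x i).re) ⬝ᵥ L *ᵥ (fun i => (x i).re)
        + (fun i => (x i).im) ⬝ᵥ L *ᵥ (fun i => (x i).im) := by
  simp only [dotProduct, mulVec, map_apply, Pi.star_apply, Finset.mul_sum, Complex.re_sum,
    ← Finset.sum_add_distrib, Complex.mul_re, Complex.mul_im, Complex.ofReal_re,
    Complex.ofReal_im, Complex.star_def, Complex.conj_re, Complex.conj_im]
  refine Finset.sum_congr rfl fun i _ => Finset.sum_congr rfl fun j _ => ?_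
  ring

lemma PosSemidef.map_ofReal {L : Matrix n n ℝ} (hL : L.PosSemidef) :
    (L.map ((↑) : ℝ → ℂ)).PosSemidef := by
  have hH : (L.map ((↑) : ℝ → ℂ)).IsHermitian :=
    hL.isHermitian.map _ fun r => (Complex.conj_ofReal r).symm
  refine .of_dotProduct_mulVec_nonneg hH fun x => Complex.nonneg_iff.2 ⟨?_, ?_⟩
  · rw [re_star_dotProduct_map_ofReal_mulVec]
    exact add_nonneg (hL.dotProduct_mulVec_nonneg _) (hL.dotProduct_mulVec_nonneg _)
  · exact (hH.im_star_dotProduct_mulVec_self x).symm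

lemma re_star_dotProduct_conjTranspose_mulVec (M : Matrix n n ℂ) (v : n → ℂ) :
    (star v ⬝ᵥ Mᴴ *ᵥ v).re = (star v ⬝ᵥ M *ᵥ v).re := by
  rw [dotProduct_mulVec, ← star_mulVec, star_dotProduct, Complex.star_def, Complex.conj_re]

lemma re_star_dotProduct_add_I_smul_mulVec (S : Matrix n n ℂ) {K : Matrix n n ℂ}
    (hK : K.IsHermitian) (v : n → ℂ) :
    (star v ⬝ᵥ (S + Complex.I • K) *ᵥ v).re = (star v ⬝ᵥ S *ᵥ v).re := by
  have him : (star v ⬝ᵥ K *ᵥ v).im = 0 := hK.im_star_dotProduct_mulVec_self v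
  simp [add_mulVec, smul_mulVec, dotProduct_add, dotProduct_smul, him]

omit [Fintype n] in
lemma conjTranspose_add_I_smul {S K : Matrix n n ℂ} (hS : S.IsHermitian) (hK : K.IsHermitian) :
    (S + Complex.I • K)ᴴ = S - Complex.I • K := by
  rw [conjTranspose_add, conjTranspose_smul, hS.eq, hK.eq, Complex.star_def, Complex.conj_I,
    neg_smul, sub_eq_add_neg]

variable [DecidableEq n]

lemma isUnit_det_add_I_smul {S K : Matrix n n ℂ} (hS : S.PosDef) (hK : K.IsHermitian) :
    IsUnit (S + Complex.I • K).det := by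
  refine isUnit_iff_ne_zero.2 fun hdet => ?_
  obtain ⟨v, hv, hAv⟩ := exists_mulVec_eq_zero_iff.2 hdet
  have hpos := hS.re_dotProduct_pos hv
  rw [RCLike.re_to_complex, ← re_star_dotProduct_add_I_smul_mulVec S hK, hAv] at hpos
  simp at hpos

lemma mul_re_star_dotProduct_self_le {P : Matrix n n ℂ} (hP : P.PosSemidef) (h : ℝ)
    (v : n → ℂ) : h * (star v ⬝ᵥ v).re ≤ (star v ⬝ᵥ (P + (h : ℂ) • 1) *ᵥ v).re := by
  have hnonneg := hP.re_dotProduct_nonneg v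
  rw [RCLike.re_to_complex] at hnonneg
  simpa [add_mulVec, smul_mulVec, dotProduct_add, dotProduct_smul] using hnonneg

lemma star_dotProduct_conjTranspose_inv_mul_inv_mulVec (A : Matrix n n ℂ) (x : n → ℂ) :
    star x ⬝ᵥ (Aᴴ⁻¹ * A⁻¹) *ᵥ x = star (A⁻¹ *ᵥ x) ⬝ᵥ A⁻¹ *ᵥ x := by
  rw [← conjTranspose_nonsing_inv, ← mulVec_mulVec, dotProduct_mulVec, ← star_mulVec]

lemma star_dotProduct_inv_mulVec {A : Matrix n n ℂ} (hA : IsUnit A.det) (x : n → ℂ) :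
    star x ⬝ᵥ A⁻¹ *ᵥ x = star (A⁻¹ *ᵥ x) ⬝ᵥ Aᴴ *ᵥ A⁻¹ *ᵥ x := by
  set ψ := A⁻¹ *ᵥ x
  have hψ : A *ᵥ ψ = x := by rw [mulVec_mulVec, mul_nonsing_inv _ hA, one_mulVec]
  rw [← hψ, star_mulVec, ← dotProduct_mulVec]

lemma sum_sum_ofReal_mul_mul_ofReal (M : Matrix n n ℂ) (φ : n → ℝ) :
    ∑ i, ∑ j, (φ i : ℂ) * M i j * (φ j : ℂ)
      = star (fun i => (φ i : ℂ)) ⬝ᵥ M *ᵥ (fun i => (φ i : ℂ)) := by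
  have hφ : star (fun i => (φ i : ℂ)) = fun i => (φ i : ℂ) :=
    funext fun i => Complex.conj_ofReal _
  rw [hφ, ← toBilin'_apply', toBilin'_apply]

end Matrix

theorem sandwich_quadratic_form_general (N : ℕ)
    (L : Matrix (Fin N) (Fin N) ℝ) (hLpsd : L.PosSemidef)
    (h : ℝ) (hh : 0 < h) (α : Fin N → ℝ) (φ : Fin N → ℝ) :
    (∑ i, ∑ j, (φ i : ℂ) *
        (((L.map (fun x => (x : ℂ)) + (h : ℂ) • 1
            - Complex.I • Matrix.diagonal (fun i => (α i : ℂ)))⁻¹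
          * (L.map (fun x => (x : ℂ)) + (h : ℂ) • 1
            + Complex.I • Matrix.diagonal (fun i => (α i : ℂ)))⁻¹) i j) * (φ j : ℂ)).im = 0
    ∧ 0 ≤ (∑ i, ∑ j, (φ i : ℂ) *
        (((L.map (fun x => (x : ℂ)) + (h : ℂ) • 1
            - Complex.I • Matrix.diagonal (fun i => (α i : ℂ)))⁻¹
          * (L.map (fun x => (x : ℂ)) + (h : ℂ) • 1
            + Complex.I • Matrix.diagonal (fun i => (α i : ℂ)))⁻¹) i j) * (φ j : ℂ)).re
    ∧ (∑ i, ∑ j, (φ i : ℂ) *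
        (((L.map (fun x => (x : ℂ)) + (h : ℂ) • 1
            - Complex.I • Matrix.diagonal (fun i => (α i : ℂ)))⁻¹
          * (L.map (fun x => (x : ℂ)) + (h : ℂ) • 1
            + Complex.I • Matrix.diagonal (fun i => (α i : ℂ)))⁻¹) i j) * (φ j : ℂ)).re
      ≤ (1 / h) * (∑ i, ∑ j, (φ i : ℂ) *
        ((L.map (fun x => (x : ℂ)) + (h : ℂ) • 1
          + Complex.I • Matrix.diagonal (fun i => (α i : ℂ)))⁻¹ i j) * (φ j : ℂ)).re := by
  have hP : (L.map (fun x => (x : ℂ))).PosSemidef := hLpsd.map_ofReal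
  have hS : (L.map (fun x => (x : ℂ)) + (h : ℂ) • 1).PosDef :=
    PosDef.posSemidef_add hP (PosDef.one.smul (Complex.zero_lt_real.2 hh))
  have hK : (Matrix.diagonal fun i => (α i : ℂ)).IsHermitian :=
    isHermitian_diagonal_of_self_adjoint _ (funext fun i => Complex.conj_ofReal _)
  rw [← conjTranspose_add_I_smul hS.isHermitian hK, sum_sum_ofReal_mul_mul_ofReal,
    sum_sum_ofReal_mul_mul_ofReal, star_dotProduct_conjTranspose_inv_mul_inv_mulVec,
    star_dotProduct_inv_mulVec (isUnit_det_add_I_smul hS hK),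
    re_star_dotProduct_conjTranspose_mulVec, re_star_dotProduct_add_I_smul_mulVec _ hK]
  refine ⟨(Complex.nonneg_iff.1 (dotProduct_star_self_nonneg _)).2.symm,
    (Complex.nonneg_iff.1 (dotProduct_star_self_nonneg _)).1, ?_⟩
  rw [one_div, le_inv_mul_iff₀ hh]
  exact mul_re_star_dotProduct_self_le hP h _

/-- For every real vector `φ`, the complex number `φᵗ (L+hI−iα)⁻¹ (L+hI+iα)⁻¹ φ` is a
nonnegative real and is at most `(1/h)·Re(φᵗ (L+hI+iα)⁻¹ φ)`. -/
theorem sandwich_quadratic_form (N : ℕ) (hN : 0 < N)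
    (L : Matrix (Fin N) (Fin N) ℝ) (hLsymm : L.IsSymm) (hLpsd : L.PosSemidef)
    (h : ℝ) (hh : 0 < h) (α : Fin N → ℝ) (φ : Fin N → ℝ) :
    (∑ i, ∑ j, (φ i : ℂ) *
        (((L.map (fun x => (x : ℂ)) + (h : ℂ) • 1
            - Complex.I • Matrix.diagonal (fun i => (α i : ℂ)))⁻¹
          * (L.map (fun x => (x : ℂ)) + (h : ℂ) • 1
            + Complex.I • Matrix.diagonal (fun i => (α i : ℂ)))⁻¹) i j) * (φ j : ℂ)).im = 0
    ∧ 0 ≤ (∑ i, ∑ j, (φ i : ℂ) *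
        (((L.map (fun x => (x : ℂ)) + (h : ℂ) • 1
            - Complex.I • Matrix.diagonal (fun i => (α i : ℂ)))⁻¹
          * (L.map (fun x => (x : ℂ)) + (h : ℂ) • 1
            + Complex.I • Matrix.diagonal (fun i => (α i : ℂ)))⁻¹) i j) * (φ j : ℂ)).re
    ∧ (∑ i, ∑ j, (φ i : ℂ) *
        (((L.map (fun x => (x : ℂ)) + (h : ℂ) • 1
            - Complex.I • Matrix.diagonal (fun i => (α i : ℂ)))⁻¹
          * (L.map (fun x => (x : ℂ)) + (h : ℂ) • 1
            + Complex.I • Matrix.diagonal (fun i => (α i : ℂ)))⁻¹) i j) * (φ j : ℂ)).re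
      ≤ (1 / h) * (∑ i, ∑ j, (φ i : ℂ) *
        ((L.map (fun x => (x : ℂ)) + (h : ℂ) • 1
          + Complex.I • Matrix.diagonal (fun i => (α i : ℂ)))⁻¹ i j) * (φ j : ℂ)).re :=
  sandwich_quadratic_form_general N L hLpsd h hh α φ
end

section
/- For every index k ∈ {1,…,N} one has 0 ≤ Re( (L + hI + iα)^{-1}_{kk} ) ≤ (L + hI)^{-1}_{kk}. -/
/-!
Write `M = A + iB` with `A = L + hI` positive definite and `B = diag α` Hermitian, and let `x` be
the `k`-th column of `M⁻¹`. Then `Mx = e_k`, so `M⁻¹ₖₖ = xₖ` is the conjugate of `x* M x`, whose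
real part is `x* A x ≥ 0` because `x* B x` is real. For the upper bound let `y = A⁻¹ e_k`; then
`0 ≤ (x - y)* A (x - y) = x* A x - 2 Re xₖ + A⁻¹ₖₖ = A⁻¹ₖₖ - Re xₖ`.
-/

open Matrix
open scoped ComplexOrder

namespace Matrix

variable {n : Type*} [Fintype n]

lemma re_star_dotProduct_add_I_smul_mulVec_s9 {A B : Matrix n n ℂ} (hB : B.IsHermitian)
    (x : n → ℂ) :
    (star x ⬝ᵥ ((A + Complex.I • B) *ᵥ x)).re = (star x ⬝ᵥ (A *ᵥ x)).re := by
  have him : (star x ⬝ᵥ (B *ᵥ x)).im = 0 := hB.im_star_dotProduct_mulVec_self x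
  simp [add_mulVec, smul_mulVec, dotProduct_add, him]

variable [DecidableEq n]

lemma map_nonsing_inv {K L : Type*} [Field K] [Field L] (f : K →+* L) (A : Matrix n n K) :
    A⁻¹.map f = (A.map f)⁻¹ := by
  have hdet : (A.map f).det = f A.det := (f.map_det A).symm
  have hadj : (A.map f).adjugate = A.adjugate.map f := (f.map_adjugate A).symm
  ext i j
  simp [inv_def, Ring.inverse_eq_inv', hdet, hadj]

open scoped MatrixOrder in
lemma PosSemidef.map_ofReal_s9 {A : Matrix n n ℝ} (hA : A.PosSemidef) :
    (A.map ((↑) : ℝ → ℂ)).PosSemidef := by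
  obtain ⟨S, rfl⟩ : ∃ S : Matrix n n ℝ, A = Sᴴ * S :=
    ⟨CFC.sqrt A, by
      rw [← star_eq_conjTranspose, (CFC.sqrt_nonneg A).isSelfAdjoint.star_eq,
        CFC.sqrt_mul_sqrt_self A hA.nonneg]⟩
  change ((Sᴴ * S).map Complex.ofRealHom).PosSemidef
  rw [Matrix.map_mul, conjTranspose_map _ (by intro; simp)]
  exact posSemidef_conjTranspose_mul_self _

variable {A B : Matrix n n ℂ}

lemma PosSemidef.two_mul_re_apply_le {k : n} (hA : A.PosSemidef) {y : n → ℂ}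
    (hy : A *ᵥ y = Pi.single k 1) (x : n → ℂ) :
    2 * (x k).re ≤ (star x ⬝ᵥ (A *ᵥ x)).re + (y k).re := by
  have hxy : star x ⬝ᵥ (A *ᵥ y) = star (x k) := by
    rw [hy, dotProduct_single, mul_one, Pi.star_apply]
  have hyx : star y ⬝ᵥ (A *ᵥ x) = x k := by
    rw [dotProduct_mulVec, ← hA.isHermitian.eq, ← star_mulVec, hy, Pi.star_single, star_one,
      single_dotProduct, one_mul]
  have hyy : star y ⬝ᵥ (A *ᵥ y) = star (y k) := by
    rw [hy, dotProduct_single, mul_one, Pi.star_apply]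
  have hdiff := hA.re_dotProduct_nonneg (x - y)
  simp only [star_sub, mulVec_sub, sub_dotProduct, dotProduct_sub, hxy, hyx, hyy,
    RCLike.star_def, RCLike.re_to_complex, Complex.sub_re, Complex.conj_re] at hdiff
  linarith

lemma isUnit_det_add_I_smul_s9 (hA : A.PosDef) (hB : B.IsHermitian) :
    IsUnit (A + Complex.I • B).det := by
  refine isUnit_iff_ne_zero.mpr fun hdet => ?_
  obtain ⟨v, hv, hMv⟩ := exists_mulVec_eq_zero_iff.mpr hdet
  have hpos : 0 < (star v ⬝ᵥ (A *ᵥ v)).re := hA.re_dotProduct_pos hv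
  rw [← re_star_dotProduct_add_I_smul_mulVec_s9 hB, hMv, dotProduct_zero] at hpos
  exact hpos.false

lemma re_inv_add_I_smul_apply_self (hA : A.PosDef) (hB : B.IsHermitian) (k : n) :
    ((A + Complex.I • B)⁻¹ k k).re =
      (star ((A + Complex.I • B)⁻¹.col k) ⬝ᵥ (A *ᵥ (A + Complex.I • B)⁻¹.col k)).re := by
  have hMx : (A + Complex.I • B) *ᵥ (A + Complex.I • B)⁻¹.col k = Pi.single k 1 := by
    rw [← mulVec_single_one, mulVec_mulVec, mul_nonsing_inv _ (isUnit_det_add_I_smul_s9 hA hB),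
      one_mulVec]
  rw [← re_star_dotProduct_add_I_smul_mulVec_s9 hB, hMx, dotProduct_single, mul_one,
    Pi.star_apply, col_apply, Complex.star_def, Complex.conj_re]

lemma re_inv_add_I_smul_apply_self_nonneg (hA : A.PosDef) (hB : B.IsHermitian) (k : n) :
    0 ≤ ((A + Complex.I • B)⁻¹ k k).re := by
  rw [re_inv_add_I_smul_apply_self hA hB]
  exact hA.posSemidef.re_dotProduct_nonneg _

lemma re_inv_add_I_smul_apply_self_le (hA : A.PosDef) (hB : B.IsHermitian) (k : n) :
    ((A + Complex.I • B)⁻¹ k k).re ≤ (A⁻¹ k k).re := by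
  have hAy : A *ᵥ A⁻¹.col k = Pi.single k 1 := by
    rw [← mulVec_single_one, mulVec_mulVec,
      mul_nonsing_inv _ ((isUnit_iff_isUnit_det A).mp hA.isUnit), one_mulVec]
  have hle := hA.posSemidef.two_mul_re_apply_le hAy ((A + Complex.I • B)⁻¹.col k)
  rw [← re_inv_add_I_smul_apply_self hA hB] at hle
  simp only [col_apply] at hle
  linarith

end Matrix

theorem diagonal_real_part_bound_general (N : ℕ)
    (L : Matrix (Fin N) (Fin N) ℝ) (hLpsd : L.PosSemidef)
    (h : ℝ) (hh : 0 < h) (α : Fin N → ℝ) (k : Fin N) :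
    0 ≤ ((L.map (fun x => (x : ℂ)) + (h : ℂ) • 1
          + Complex.I • Matrix.diagonal (fun i => (α i : ℂ)))⁻¹ k k).re
    ∧ ((L.map (fun x => (x : ℂ)) + (h : ℂ) • 1
          + Complex.I • Matrix.diagonal (fun i => (α i : ℂ)))⁻¹ k k).re
      ≤ (L + h • (1 : Matrix (Fin N) (Fin N) ℝ))⁻¹ k k := by
  have hA : (L.map (fun x => (x : ℂ)) + (h : ℂ) • 1).PosDef :=
    PosDef.posSemidef_add hLpsd.map_ofReal_s9 (PosDef.one.smul (Complex.zero_lt_real.mpr hh))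
  have hB : (diagonal fun i => (α i : ℂ)).IsHermitian :=
    isHermitian_diagonal_of_self_adjoint _ (by ext; simp)
  have hmap : (L + h • 1).map (fun x => (x : ℂ)) = L.map (fun x => (x : ℂ)) + (h : ℂ) • 1 := by
    ext i j
    by_cases hij : i = j <;> simp [one_apply, hij]
  have hinv : ((L + h • 1)⁻¹ k k : ℂ) = (L.map (fun x => (x : ℂ)) + (h : ℂ) • 1)⁻¹ k k := by
    rw [← hmap]
    exact congrFun₂ (map_nonsing_inv Complex.ofRealHom _) k k
  refine ⟨re_inv_add_I_smul_apply_self_nonneg hA hB k, ?_⟩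
  simpa only [← hinv, Complex.ofReal_re] using re_inv_add_I_smul_apply_self_le hA hB k

/-- For every `k`, `0 ≤ Re((L+hI+iα)⁻¹ₖₖ) ≤ (L+hI)⁻¹ₖₖ`. -/
theorem diagonal_real_part_bound (N : ℕ) (hN : 0 < N)
    (L : Matrix (Fin N) (Fin N) ℝ) (hLsymm : L.IsSymm) (hLpsd : L.PosSemidef)
    (h : ℝ) (hh : 0 < h) (α : Fin N → ℝ) (k : Fin N) :
    0 ≤ ((L.map (fun x => (x : ℂ)) + (h : ℂ) • 1
          + Complex.I • Matrix.diagonal (fun i => (α i : ℂ)))⁻¹ k k).re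
    ∧ ((L.map (fun x => (x : ℂ)) + (h : ℂ) • 1
          + Complex.I • Matrix.diagonal (fun i => (α i : ℂ)))⁻¹ k k).re
      ≤ (L + h • (1 : Matrix (Fin N) (Fin N) ℝ))⁻¹ k k :=
  diagonal_real_part_bound_general N L hLpsd h hh α k
end
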